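/- arXiv:1807.10817 — 3 statements merged into one kernel-verified Lean document; each statement's English description precedes it below -/
import Mathlib

section
/- Let H be a self-adjoint operator (matrix) on a finite-dimensional complex inner product space, and let A_0, A_1, …, A_N be self-adjoint positive-definite operators, with α_1, …, α_N distinct real numbers. Suppose λ ∈ ℂ with λ ∉ {α_1,…,α_N} and there exists ψ ≠ 0 such that H ψ = λ A_0 ψ − Σ_{i=1}^N (λ − α_i)⁻¹ A_i ψ. Then λ is real. -/
open Finset

/-!
Pair the eigenvalue equation with `ψ`. Since `H`, `A₀` and the `Aᵢ` are symmetric, all the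
quadratic forms `⟪ψ, Tψ⟫` are real, so the imaginary part of the resulting scalar identity is
`0 = Im λ · (⟪ψ, A₀ψ⟫ + Σ ⟪ψ, Aᵢψ⟫ / |λ - αᵢ|²)`, using `Im (λ - α)⁻¹ = -Im λ / |λ - α|²`.
The bracket is positive, hence `Im λ = 0`.
-/

namespace Complex

theorem im_mul_ofReal_sub_sum_inv_sub_mul_ofReal {ι : Type*} (s : Finset ι) (z : ℂ) (a₀ : ℝ)
    (a α : ι → ℝ) :
    (z * a₀ - ∑ i ∈ s, (z - α i)⁻¹ * a i).im
      = z.im * (a₀ + ∑ i ∈ s, a i / normSq (z - α i)) := by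
  simp only [sub_im, mul_im, ofReal_re, ofReal_im, mul_zero, zero_add, sub_zero, im_sum, inv_im,
    mul_add, mul_sum]
  rw [sub_eq_add_neg, ← Finset.sum_neg_distrib]
  congr 1
  exact Finset.sum_congr rfl fun _ _ => by ring

theorem im_eq_zero_of_im_mul_ofReal_sub_sum_inv_sub_mul_ofReal_eq_zero {ι : Type*}
    {s : Finset ι} {z : ℂ} {a₀ : ℝ} {a α : ι → ℝ} (ha₀ : 0 < a₀) (ha : ∀ i ∈ s, 0 ≤ a i)
    (h : (z * a₀ - ∑ i ∈ s, (z - α i)⁻¹ * a i).im = 0) :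
    z.im = 0 := by
  rw [im_mul_ofReal_sub_sum_inv_sub_mul_ofReal] at h
  have hpos : 0 < a₀ + ∑ i ∈ s, a i / normSq (z - α i) :=
    add_pos_of_pos_of_nonneg ha₀ <| sum_nonneg fun i hi => div_nonneg (ha i hi) (normSq_nonneg _)
  exact (mul_eq_zero.mp h).resolve_right hpos.ne'

end Complex

theorem stmt_5_general {E : Type*} [NormedAddCommGroup E] [InnerProductSpace ℂ E]
    (N : ℕ) (H A0 : E →ₗ[ℂ] E) (A : Fin N → (E →ₗ[ℂ] E)) (α : Fin N → ℝ)
    (hH : H.IsSymmetric)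
    (hA0 : A0.IsSymmetric) (hA0pos : ∀ ψ : E, ψ ≠ 0 → 0 < (inner ℂ ψ (A0 ψ) : ℂ).re)
    (hA : ∀ i, (A i).IsSymmetric)
    (hApos : ∀ i, ∀ ψ : E, ψ ≠ 0 → 0 < (inner ℂ ψ ((A i) ψ) : ℂ).re)
    (lam : ℂ)
    (ψ : E) (hψ : ψ ≠ 0)
    (heq : H ψ = lam • A0 ψ - ∑ i, (lam - (α i : ℂ))⁻¹ • (A i) ψ) :
    lam.im = 0 := by
  have hpair : inner ℂ ψ (H ψ) = lam * (inner ℂ ψ (A0 ψ)).re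
      - ∑ i, (lam - α i)⁻¹ * (inner ℂ ψ (A i ψ)).re := by
    have hreal : ∀ T : E →ₗ[ℂ] E, T.IsSymmetric → ((inner ℂ ψ (T ψ)).re : ℂ) = inner ℂ ψ (T ψ) :=
      fun T hT => hT.coe_re_inner_self_apply ψ
    simp only [heq, inner_sub_right, inner_smul_right, inner_sum, hreal A0 hA0, hreal _ (hA _)]
  have him := congrArg Complex.im hpair
  exact Complex.im_eq_zero_of_im_mul_ofReal_sub_sum_inv_sub_mul_ofReal_eq_zero (hA0pos ψ hψ)
    (fun i _ => (hApos i ψ hψ).le) (him.symm.trans (hH.im_inner_self_apply ψ))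

/-- Eigenvalues of a Herglotz operator pencil
`M(λ) = H − λ A₀ + Σ (λ − α_i)⁻¹ A_i` with `H` self-adjoint and the `A_i`
self-adjoint positive definite are real. -/
theorem stmt_5 {E : Type*} [NormedAddCommGroup E] [InnerProductSpace ℂ E]
    [FiniteDimensional ℂ E]
    (N : ℕ) (H A0 : E →ₗ[ℂ] E) (A : Fin N → (E →ₗ[ℂ] E)) (α : Fin N → ℝ)
    (hH : H.IsSymmetric)
    (hA0 : A0.IsSymmetric) (hA0pos : ∀ ψ : E, ψ ≠ 0 → 0 < (inner ℂ ψ (A0 ψ) : ℂ).re)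
    (hA : ∀ i, (A i).IsSymmetric)
    (hApos : ∀ i, ∀ ψ : E, ψ ≠ 0 → 0 < (inner ℂ ψ ((A i) ψ) : ℂ).re)
    (hdist : Function.Injective α)
    (lam : ℂ) (hlam : ∀ i, lam ≠ (α i : ℂ))
    (ψ : E) (hψ : ψ ≠ 0)
    (heq : H ψ = lam • A0 ψ - ∑ i, (lam - (α i : ℂ))⁻¹ • (A i) ψ) :
    lam.im = 0 :=
  stmt_5_general N H A0 A α hH hA0 hA0pos hA hApos lam ψ hψ heq
end

section
/- Let M(λ) = H − λ A_0 + Σ_{i=1}^N (λ − α_i)⁻¹ A_i with H self-adjoint and A_0, …, A_N self-adjoint positive definite on a finite-dimensional complex inner product space, α_i distinct reals. If λ_0 is a real eigenvalue (not equal to any α_i) with eigenvector ψ_0 ≠ 0, then there is no Jordan chain of length 2: there is no ψ_1 with M(λ_0)ψ_1 + M'(λ_0)ψ_0 = 0. In particular every eigenvalue of the pencil is semi-simple. -/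
open Finset

/-!
If `M(λ₀) ψ₀ = 0` and `M(λ₀) ψ₁ = -M'(λ₀) ψ₀`, then since `M(λ₀)` is self-adjoint for real
`λ₀`, `⟪ψ₀, -M'(λ₀) ψ₀⟫ = ⟪M(λ₀) ψ₀, ψ₁⟫ = 0`. But `-M'(λ₀) = A₀ + Σ (λ₀ - α_i)⁻² A_i` is
positive definite, so `ψ₀ = 0`.
-/

theorem LinearMap.IsSymmetric.inner_apply_self_eq_zero_of_apply_eq {𝕜 E : Type*} [RCLike 𝕜]
    [NormedAddCommGroup E] [InnerProductSpace 𝕜 E] {T B : E →ₗ[𝕜] E} (hT : T.IsSymmetric)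
    {ψ₀ ψ₁ : E} (h₀ : T ψ₀ = 0) (h₁ : T ψ₁ = B ψ₀) : inner 𝕜 ψ₀ (B ψ₀) = 0 := by
  rw [← h₁, ← hT, h₀, inner_zero_left]

noncomputable section HerglotzPencil

variable {E : Type*} [NormedAddCommGroup E] [InnerProductSpace ℂ E] {N : ℕ}

def herglotzPencil (H A₀ : E →ₗ[ℂ] E) (A : Fin N → E →ₗ[ℂ] E) (α : Fin N → ℝ) (lam : ℝ) :
    E →ₗ[ℂ] E :=
  H - (lam : ℂ) • A₀ + ∑ i, ((lam : ℂ) - α i)⁻¹ • A i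

/-- `-M'(λ)` for the pencil `M = herglotzPencil H A₀ A α`. -/
def herglotzPencilNegDeriv (A₀ : E →ₗ[ℂ] E) (A : Fin N → E →ₗ[ℂ] E) (α : Fin N → ℝ)
    (lam : ℝ) : E →ₗ[ℂ] E :=
  A₀ + ∑ i, (((lam : ℂ) - α i) ^ 2)⁻¹ • A i

variable {H A₀ : E →ₗ[ℂ] E} {A : Fin N → E →ₗ[ℂ] E} {α : Fin N → ℝ} {lam : ℝ}

theorem herglotzPencil_apply (ψ : E) :
    herglotzPencil H A₀ A α lam ψ =
      H ψ - (lam : ℂ) • A₀ ψ + ∑ i, ((lam : ℂ) - α i)⁻¹ • A i ψ := by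
  simp [herglotzPencil, LinearMap.sum_apply]

theorem herglotzPencilNegDeriv_apply (ψ : E) :
    herglotzPencilNegDeriv A₀ A α lam ψ = A₀ ψ + ∑ i, (((lam : ℂ) - α i) ^ 2)⁻¹ • A i ψ := by
  simp [herglotzPencilNegDeriv, LinearMap.sum_apply]

theorem isSymmetric_herglotzPencil (hH : H.IsSymmetric) (hA₀ : A₀.IsSymmetric)
    (hA : ∀ i, (A i).IsSymmetric) : (herglotzPencil H A₀ A α lam).IsSymmetric := by
  refine (hH.sub (hA₀.smul (Complex.conj_ofReal lam))).add
    (LinearMap.isSymmetric_sum _ fun i _ => (hA i).smul ?_)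
  rw [← Complex.ofReal_sub, ← Complex.ofReal_inv, Complex.conj_ofReal]

theorem re_inner_herglotzPencilNegDeriv_pos {ψ : E} (hA₀ : 0 < (inner ℂ ψ (A₀ ψ)).re)
    (hA : ∀ i, 0 ≤ (inner ℂ ψ (A i ψ)).re) :
    0 < (inner ℂ ψ (herglotzPencilNegDeriv A₀ A α lam ψ)).re := by
  have hterm : ∀ i, 0 ≤ (inner ℂ ψ ((((lam : ℂ) - α i) ^ 2)⁻¹ • A i ψ)).re := fun i => by
    rw [inner_smul_right, ← Complex.ofReal_sub, ← Complex.ofReal_pow, ← Complex.ofReal_inv,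
      Complex.re_ofReal_mul]
    exact mul_nonneg (by positivity) (hA i)
  rw [herglotzPencilNegDeriv_apply, inner_add_right, inner_sum, Complex.add_re, Complex.re_sum]
  exact add_pos_of_pos_of_nonneg hA₀ (sum_nonneg fun i _ => hterm i)

end HerglotzPencil

theorem stmt_6_general {E : Type*} [NormedAddCommGroup E] [InnerProductSpace ℂ E]
    (N : ℕ) (H A0 : E →ₗ[ℂ] E) (A : Fin N → (E →ₗ[ℂ] E)) (α : Fin N → ℝ)
    (hH : H.IsSymmetric)
    (hA0 : A0.IsSymmetric) (hA0pos : ∀ ψ : E, ψ ≠ 0 → 0 < (inner ℂ ψ (A0 ψ) : ℂ).re)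
    (hA : ∀ i, (A i).IsSymmetric)
    (hApos : ∀ i, ∀ ψ : E, ψ ≠ 0 → 0 < (inner ℂ ψ ((A i) ψ) : ℂ).re)
    (lam0 : ℝ)
    (ψ0 : E) (hψ0 : ψ0 ≠ 0)
    (heig : H ψ0 - (lam0 : ℂ) • A0 ψ0 + ∑ i, ((lam0 : ℂ) - (α i : ℂ))⁻¹ • (A i) ψ0 = 0) :
    ¬ ∃ ψ1 : E,
      (H ψ1 - (lam0 : ℂ) • A0 ψ1 + ∑ i, ((lam0 : ℂ) - (α i : ℂ))⁻¹ • (A i) ψ1) +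
      (-(A0 ψ0) - ∑ i, (((lam0 : ℂ) - (α i : ℂ)) ^ 2)⁻¹ • (A i) ψ0) = 0 := by
  rintro ⟨ψ1, hchain⟩
  have hM₀ : herglotzPencil H A0 A α lam0 ψ0 = 0 := by rwa [herglotzPencil_apply]
  have hM₁ : herglotzPencil H A0 A α lam0 ψ1 = herglotzPencilNegDeriv A0 A α lam0 ψ0 := by
    rw [herglotzPencil_apply, herglotzPencilNegDeriv_apply]
    linear_combination (norm := module) hchain
  have hzero :=
    (isSymmetric_herglotzPencil hH hA0 hA).inner_apply_self_eq_zero_of_apply_eq hM₀ hM₁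
  have hpos := re_inner_herglotzPencilNegDeriv_pos (α := α) (lam := lam0) (hA0pos ψ0 hψ0)
    fun i => (hApos i ψ0 hψ0).le
  rw [hzero, Complex.zero_re] at hpos
  exact hpos.false

/-- For the Herglotz operator pencil `M(λ) = H − λ A₀ + Σ (λ − α_i)⁻¹ A_i`
with `H` self-adjoint and `A₀, …, A_N` self-adjoint positive definite, no real
eigenvalue admits a Jordan chain of length 2: there is no `ψ₁` with
`M(λ₀)ψ₁ + M'(λ₀)ψ₀ = 0`, where `M'(λ₀) = −A₀ − Σ (λ₀ − α_i)⁻² A_i`.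
Hence every eigenvalue is semi-simple. -/
theorem stmt_6 {E : Type*} [NormedAddCommGroup E] [InnerProductSpace ℂ E]
    [FiniteDimensional ℂ E]
    (N : ℕ) (H A0 : E →ₗ[ℂ] E) (A : Fin N → (E →ₗ[ℂ] E)) (α : Fin N → ℝ)
    (hH : H.IsSymmetric)
    (hA0 : A0.IsSymmetric) (hA0pos : ∀ ψ : E, ψ ≠ 0 → 0 < (inner ℂ ψ (A0 ψ) : ℂ).re)
    (hA : ∀ i, (A i).IsSymmetric)
    (hApos : ∀ i, ∀ ψ : E, ψ ≠ 0 → 0 < (inner ℂ ψ ((A i) ψ) : ℂ).re)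
    (hdist : Function.Injective α)
    (lam0 : ℝ) (hlam0 : ∀ i, lam0 ≠ α i)
    (ψ0 : E) (hψ0 : ψ0 ≠ 0)
    (heig : H ψ0 - (lam0 : ℂ) • A0 ψ0 + ∑ i, ((lam0 : ℂ) - (α i : ℂ))⁻¹ • (A i) ψ0 = 0) :
    ¬ ∃ ψ1 : E,
      (H ψ1 - (lam0 : ℂ) • A0 ψ1 + ∑ i, ((lam0 : ℂ) - (α i : ℂ))⁻¹ • (A i) ψ1) +
      (-(A0 ψ0) - ∑ i, (((lam0 : ℂ) - (α i : ℂ)) ^ 2)⁻¹ • (A i) ψ0) = 0 :=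
  stmt_6_general N H A0 A α hH hA0 hA0pos hA hApos lam0 ψ0 hψ0 heig
end

section
/- Suppose g(x) < 0 for all x ∈ [a,b], D > 0 and C¹, and Θ solves the Prüfer equation Θ' = −sin²Θ − g(x) cos²Θ − (D'/D) sin Θ cos Θ with Θ(a) = 0. Then Θ(x) ∈ (0, π/2) for all x ∈ (a, b]. In particular the corresponding solution p of −(Dp')' = g p with p(a) = 1, p'(a) = 0 has no zeros and satisfies p' > 0 on (a,b]. -/
open Real Set Filter Topology

lemma left_of_pos {f : ℝ → ℝ} {f' c : ℝ} (h : HasDerivAt f f' c) (hp : 0 < f') :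
    ∀ᶠ x in 𝓝[<] c, f x < f c := by
  have ht := hasDerivAt_iff_tendsto_slope.mp h
  have h1 : ∀ᶠ x in 𝓝[≠] c, slope f c x ∈ Ioi (0:ℝ) := ht (Ioi_mem_nhds hp)
  have h2 : 𝓝[<] c ≤ 𝓝[≠] c := nhdsWithin_mono _ (fun x hx => ne_of_lt hx)
  filter_upwards [h2 h1, self_mem_nhdsWithin] with x hx hx'
  rw [mem_Ioi, slope_def_field] at hx
  rcases div_pos_iff.mp hx with ⟨_, h⟩ | ⟨h, _⟩ <;> simp at hx' ⊢ <;> linarith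

lemma left_of_neg {f : ℝ → ℝ} {f' c : ℝ} (h : HasDerivAt f f' c) (hp : f' < 0) :
    ∀ᶠ x in 𝓝[<] c, f c < f x := by
  have ht := hasDerivAt_iff_tendsto_slope.mp h
  have h1 : ∀ᶠ x in 𝓝[≠] c, slope f c x ∈ Iio (0:ℝ) := ht (Iio_mem_nhds hp)
  have h2 : 𝓝[<] c ≤ 𝓝[≠] c := nhdsWithin_mono _ (fun x hx => ne_of_lt hx)
  filter_upwards [h2 h1, self_mem_nhdsWithin] with x hx hx'
  rw [mem_Iio, slope_def_field] at hx
  rcases div_neg_iff.mp hx with ⟨_, h⟩ | ⟨h, _⟩ <;> simp at hx' ⊢ <;> linarith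

lemma right_of_pos {f : ℝ → ℝ} {f' c : ℝ} (h : HasDerivAt f f' c) (hp : 0 < f') :
    ∀ᶠ x in 𝓝[>] c, f c < f x := by
  have ht := hasDerivAt_iff_tendsto_slope.mp h
  have h1 : ∀ᶠ x in 𝓝[≠] c, slope f c x ∈ Ioi (0:ℝ) := ht (Ioi_mem_nhds hp)
  have h2 : 𝓝[>] c ≤ 𝓝[≠] c := nhdsWithin_mono _ (fun x hx => ne_of_gt hx)
  filter_upwards [h2 h1, self_mem_nhdsWithin] with x hx hx'
  rw [mem_Ioi, slope_def_field] at hx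
  rcases div_pos_iff.mp hx with ⟨h, _⟩ | ⟨_, h⟩ <;> simp at hx' ⊢ <;> linarith

lemma stay_pos {a b : ℝ} (hab : a < b) {f g : ℝ → ℝ}
    (hf : ContinuousOn f (Icc a b)) (hg : ContinuousOn g (Icc a b))
    (h0 : ∀ᶠ x in 𝓝[>] a, 0 < f x ∧ 0 < g x)
    (hbf : ∀ c ∈ Ioc a b, (∀ x ∈ Ioo a c, 0 < f x ∧ 0 < g x) → f c ≤ 0 → False)
    (hbg : ∀ c ∈ Ioc a b, (∀ x ∈ Ioo a c, 0 < f x ∧ 0 < g x) → g c ≤ 0 → False) :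
    ∀ x ∈ Ioc a b, 0 < f x ∧ 0 < g x := by
  obtain ⟨u, hau, hu⟩ := mem_nhdsGT_iff_exists_Ioo_subset.mp h0
  rw [mem_Ioi] at hau
  set a' := min u b with ha'
  have haa' : a < a' := lt_min hau hab
  have hsub : Icc a' b ⊆ Icc a b := Icc_subset_Icc haa'.le le_rfl
  set E := {x ∈ Icc a' b | f x ≤ 0 ∨ g x ≤ 0} with hE
  have hclosed : IsClosed E := by
    have : E = (Icc a' b ∩ f ⁻¹' Iic 0) ∪ (Icc a' b ∩ g ⁻¹' Iic 0) := by
      ext x; simp [hE, and_or_left]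
    rw [this]
    exact ((hf.mono hsub).preimage_isClosed_of_isClosed isClosed_Icc isClosed_Iic).union
      ((hg.mono hsub).preimage_isClosed_of_isClosed isClosed_Icc isClosed_Iic)
  have hgood : ∀ x ∈ Ioc a b, x ∉ E → 0 < f x ∧ 0 < g x := by
    intro x hx hxE
    rcases lt_or_ge x u with h | h
    · exact hu ⟨hx.1, h⟩
    · have : x ∈ Icc a' b := ⟨le_trans (min_le_left _ _) h, hx.2⟩
      by_contra hc
      push_neg at hc
      refine hxE ⟨this, ?_⟩
      rcases le_or_gt (f x) 0 with h' | h'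
      exacts [Or.inl h', Or.inr (hc h')]
  rcases eq_empty_or_nonempty E with hemp | hne
  · intro x hx
    exact hgood x hx (by simp [hemp])
  · exfalso
    have hbdd : BddBelow E := ⟨a', fun x hx => hx.1.1⟩
    have hc : sInf E ∈ E := hclosed.csInf_mem hne hbdd
    set c := sInf E with hcdef
    have hcIoc : c ∈ Ioc a b := ⟨lt_of_lt_of_le haa' hc.1.1, hc.1.2⟩
    have hprev : ∀ x ∈ Ioo a c, 0 < f x ∧ 0 < g x := by
      intro x hx
      refine hgood x ⟨hx.1, hx.2.le.trans hcIoc.2⟩ (fun hxE => ?_)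
      exact absurd (csInf_le hbdd hxE) (not_le.mpr hx.2)
    rcases hc.2 with h | h
    exacts [hbf c hcIoc hprev h, hbg c hcIoc hprev h]

/-- Below the spectrum: if `g < 0` on `[a,b]` and `Θ` solves the Prüfer
equation with `Θ(a) = 0`, then `Θ(x) ∈ (0, π/2)` for all `x ∈ (a, b]`.
Consequently the solution `p` of `−(Dp')' = g p` with `p(a) = 1`, `p'(a) = 0`
has no zeros and satisfies `p' > 0` on `(a, b]`. -/
theorem stmt_18 (a b : ℝ) (hab : a < b) (D D' g : ℝ → ℝ)
    (hDpos : ∀ x ∈ Set.Icc a b, 0 < D x)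
    (hD' : ∀ x ∈ Set.Icc a b, HasDerivAt D (D' x) x)
    (hD'cont : ContinuousOn D' (Set.Icc a b))
    (hgcont : ContinuousOn g (Set.Icc a b))
    (hgneg : ∀ x ∈ Set.Icc a b, g x < 0)
    (Θ : ℝ → ℝ) (hΘa : Θ a = 0)
    (hΘ : ∀ x ∈ Set.Icc a b, HasDerivAt Θ
      (-(Real.sin (Θ x)) ^ 2 - g x * (Real.cos (Θ x)) ^ 2 -
        (D' x / D x) * Real.sin (Θ x) * Real.cos (Θ x)) x) :
    (∀ x ∈ Set.Ioc a b, Θ x ∈ Set.Ioo 0 (π / 2)) ∧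
    (∀ p dp : ℝ → ℝ,
      (∀ x ∈ Set.Icc a b, HasDerivAt p (dp x) x) →
      (∀ x ∈ Set.Icc a b, HasDerivAt (fun y => D y * dp y) (-(g x * p x)) x) →
      p a = 1 → dp a = 0 →
      (∀ x ∈ Set.Icc a b, p x ≠ 0) ∧ (∀ x ∈ Set.Ioc a b, 0 < dp x)) := by
  have haIcc : a ∈ Set.Icc a b := ⟨le_rfl, hab.le⟩
  constructor
  · -- Part 1
    have hΘcont : ContinuousOn Θ (Icc a b) :=
      fun x hx => (hΘ x hx).continuousAt.continuousWithinAt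
    have hcont2 : ContinuousOn (fun x => π / 2 - Θ x) (Icc a b) :=
      (continuousOn_const.sub hΘcont)
    -- initial behaviour
    have hda : HasDerivAt Θ (-g a) a := by
      have := hΘ a haIcc
      rw [hΘa] at this
      simpa using this
    have h1 : ∀ᶠ x in 𝓝[>] a, 0 < Θ x := by
      have := right_of_pos hda (by linarith [hgneg a haIcc])
      filter_upwards [this] with x hx
      rwa [hΘa] at hx
    have h2 : ∀ᶠ x in 𝓝[>] a, 0 < π / 2 - Θ x := by
      have hc : ContinuousAt Θ a := (hΘ a haIcc).continuousAt
      have : ∀ᶠ x in 𝓝 a, Θ x < π / 2 := by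
        apply hc.eventually_lt continuousAt_const
        rw [hΘa]; positivity
      filter_upwards [nhdsWithin_le_nhds this] with x hx
      linarith
    have key := stay_pos hab hΘcont hcont2 (h1.and h2) ?_ ?_
    · intro x hx
      obtain ⟨p1, p2⟩ := key x hx
      exact ⟨p1, by linarith⟩
    · -- barrier at Θ = 0
      intro c hc hprev hc0
      have hcab : c ∈ Set.Icc a b := ⟨hc.1.le, hc.2⟩
      have hIoo : Ioo a c ∈ 𝓝[<] c := by
        filter_upwards [nhdsWithin_le_nhds (Ioi_mem_nhds hc.1), self_mem_nhdsWithin]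
          with x h1 h2
        exact ⟨h1, h2⟩
      have hΘpos : 0 ≤ Θ c := by
        refine ge_of_tendsto ((hΘ c hcab).continuousAt.continuousWithinAt :
          Filter.Tendsto Θ (𝓝[<] c) (𝓝 (Θ c))) ?_
        filter_upwards [hIoo] with x hx
        exact (hprev x hx).1.le
      have hΘc : Θ c = 0 := le_antisymm hc0 hΘpos
      have hdc : HasDerivAt Θ (-g c) c := by
        have := hΘ c hcab
        rw [hΘc] at this
        simpa using this
      have := left_of_pos hdc (by linarith [hgneg c hcab])
      obtain ⟨x, hx1, hx2⟩ := (this.and hIoo).exists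
      have := (hprev x hx2).1
      rw [hΘc] at hx1
      linarith
    · -- barrier at Θ = π/2
      intro c hc hprev hc0
      have hcab : c ∈ Set.Icc a b := ⟨hc.1.le, hc.2⟩
      have hIoo : Ioo a c ∈ 𝓝[<] c := by
        filter_upwards [nhdsWithin_le_nhds (Ioi_mem_nhds hc.1), self_mem_nhdsWithin]
          with x h1 h2
        exact ⟨h1, h2⟩
      have hΘle : Θ c ≤ π / 2 := by
        refine le_of_tendsto ((hΘ c hcab).continuousAt.continuousWithinAt :
          Filter.Tendsto Θ (𝓝[<] c) (𝓝 (Θ c))) ?_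
        filter_upwards [hIoo] with x hx
        linarith [(hprev x hx).2]
      have hΘc : Θ c = π / 2 := le_antisymm hΘle (by linarith)
      have hdc : HasDerivAt Θ (-1) c := by
        have := hΘ c hcab
        rw [hΘc] at this
        simpa using this
      have := left_of_neg hdc (by norm_num)
      obtain ⟨x, hx1, hx2⟩ := (this.and hIoo).exists
      have := (hprev x hx2).2
      rw [hΘc] at hx1
      linarith
  · -- Part 2
    intro p dp hp hu hpa hdpa
    set u : ℝ → ℝ := fun y => D y * dp y with hudef
    have hpcont : ContinuousOn p (Icc a b) :=
      fun x hx => (hp x hx).continuousAt.continuousWithinAt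
    have hucont : ContinuousOn u (Icc a b) :=
      fun x hx => (hu x hx).continuousAt.continuousWithinAt
    have hua : u a = 0 := by simp [hudef, hdpa]
    -- initial behaviour
    have h1 : ∀ᶠ x in 𝓝[>] a, 0 < p x := by
      have hc : ContinuousAt p a := (hp a haIcc).continuousAt
      have : ∀ᶠ x in 𝓝 a, 0 < p x := by
        apply continuousAt_const.eventually_lt hc
        rw [hpa]; norm_num
      exact nhdsWithin_le_nhds this
    have h2 : ∀ᶠ x in 𝓝[>] a, 0 < u x := by
      have hda : HasDerivAt u (-g a) a := by
        have := hu a haIcc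
        rw [hpa] at this
        simpa using this
      have := right_of_pos hda (by linarith [hgneg a haIcc])
      filter_upwards [this] with x hx
      rwa [hua] at hx
    have key := stay_pos hab hpcont hucont (h1.and h2) ?_ ?_
    · constructor
      · intro x hx
        rcases eq_or_lt_of_le hx.1 with h | h
        · rw [← h, hpa]; norm_num
        · exact ((key x ⟨h, hx.2⟩).1).ne'
      · intro x hx
        have h2 := (key x hx).2
        have hD := hDpos x ⟨hx.1.le, hx.2⟩
        simp only [hudef] at h2
        nlinarith
    · -- barrier p = 0
      intro c hc hprev hc0
      have hsmono : StrictMonoOn p (Icc a c) := by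
        refine strictMonoOn_of_hasDerivWithinAt_pos (convex_Icc a c)
          (hpcont.mono (Icc_subset_Icc le_rfl hc.2)) (f' := dp) ?_ ?_
        · intro x hx
          rw [interior_Icc] at hx
          exact (hp x ⟨hx.1.le, hx.2.le.trans hc.2⟩).hasDerivWithinAt
        · intro x hx
          rw [interior_Icc] at hx
          have := (hprev x hx).2
          have hD := hDpos x ⟨hx.1.le, hx.2.le.trans hc.2⟩
          simp only [hudef] at this
          nlinarith
      have := hsmono ⟨le_rfl, hc.1.le⟩ ⟨hc.1.le, le_rfl⟩ hc.1
      rw [hpa] at this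
      linarith
    · -- barrier u = 0
      intro c hc hprev hc0
      have hsmono : StrictMonoOn u (Icc a c) := by
        refine strictMonoOn_of_hasDerivWithinAt_pos (convex_Icc a c)
          (hucont.mono (Icc_subset_Icc le_rfl hc.2)) (f' := fun x => -(g x * p x)) ?_ ?_
        · intro x hx
          rw [interior_Icc] at hx
          exact (hu x ⟨hx.1.le, hx.2.le.trans hc.2⟩).hasDerivWithinAt
        · intro x hx
          rw [interior_Icc] at hx
          have := (hprev x hx).1
          have hg := hgneg x ⟨hx.1.le, hx.2.le.trans hc.2⟩
          show (0:ℝ) < -(g x * p x)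
          nlinarith
      have := hsmono ⟨le_rfl, hc.1.le⟩ ⟨hc.1.le, le_rfl⟩ hc.1
      rw [hua] at this
      linarith
end
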